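/- Let Σ and Σ₀ be p×p real symmetric positive definite matrices. Let λ_k and λ_{0,k} denote the k-th largest eigenvalues of Σ and Σ₀ respectively, with corresponding unit eigenvectors u_k and u_{0,k}, and assume λ_k is a simple eigenvalue of Σ. Set Ω = Σ₀^{−1/2} Σ Σ₀^{−1/2}, let U_{0,−k} = [u_{0,1},…,u_{0,k−1}, u_{0,k+1},…,u_{0,p}] ∈ ℝ^{p×(p−1)} be the matrix of the remaining eigenvectors of Σ₀, and let Λ_{0,−k} = diag(λ_{0,1},…,λ_{0,k−1}, λ_{0,k+1},…,λ_{0,p}). Suppose the (p−1)×(p−1) matrix U_{0,−k}ᵀ Ω U_{0,−k} − λ_k Λ_{0,−k}^{−1} is invertible and that λ_{0,k} · ‖ Λ_{0,−k}^{−1/2} ( U_{0,−k}ᵀ Ω U_{0,−k} − λ_k Λ_{0,−k}^{−1} )^{−1} U_{0,−k}ᵀ Ω u_{0,k} ‖₂² < 1. Then (u_kᵀ u_{0,k})² = 1 / ( 1 + ‖ √(λ_{0,k}) · Λ_{0,−k}^{−1/2} ( U_{0,−k}ᵀ Ω U_{0,−k} − λ_k Λ_{0,−k}^{−1} )^{−1}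 U_{0,−k}ᵀ Ω u_{0,k} ‖₂² ). -/

import Mathlib

/-!
Let `Q` be the orthogonal matrix with rows `u₀ᵢ`, so that `Σ₀ = Qᵀ diag(λ₀) Q` and
`Σ₀^{-1/2} = Qᵀ diag(λ₀)^{-1/2} Q`. In the coordinates `c = Q u_k` and `d = diag(λ₀)^{1/2} c`
the eigen-equation `Σ u_k = λ_k u_k` becomes `N d = λ_k diag(λ₀)⁻¹ d` with `N = Q Ω Qᵀ`.
The rows of this system with index `≠ k` say `M d_{−k} = −d_k U_{0,−k}ᵀ Ω u_{0,k}`, hence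
`c_{−k} = −√λ_{0,k} c_k v`, and `1 = ‖c‖² = c_k² (1 + λ_{0,k} ‖v‖²)`.
-/

open Matrix

/-- Euclidean norm of a real vector. -/
noncomputable def vecNorm {n : Type*} [Fintype n] (v : n → ℝ) : ℝ :=
  Real.sqrt (∑ i, v i ^ 2)

/-- `eigval A k` is the `k`-th largest eigenvalue (0-based, counted with multiplicity)
of a hermitian (= real symmetric) matrix `A`. -/
noncomputable def eigval {p : ℕ} (A : Matrix (Fin p) (Fin p) ℝ) (k : Fin p) : ℝ :=
  if hA : A.IsHermitian then hA.eigenvalues (Tuple.sort hA.eigenvalues k.rev) else 0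

open Classical in
/-- The positive definite square root of `A⁻¹`, for `A` positive definite. -/
noncomputable def invSqrt {p : ℕ} (A : Matrix (Fin p) (Fin p) ℝ) : Matrix (Fin p) (Fin p) ℝ :=
  if hA : A.PosDef then
    (hA.inv.posSemidef.1.eigenvectorUnitary : Matrix (Fin p) (Fin p) ℝ) *
      diagonal (fun i => Real.sqrt (hA.inv.posSemidef.1.eigenvalues i)) *
      (star hA.inv.posSemidef.1.eigenvectorUnitary : Matrix (Fin p) (Fin p) ℝ)
  else 0

section Orthonormal

variable {ι R : Type*} [Fintype ι] [DecidableEq ι] [CommRing R]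

theorem of_mul_transpose_eq_one {u : ι → ι → R}
    (h : ∀ i j, u i ⬝ᵥ u j = if i = j then 1 else 0) : of u * (of u)ᵀ = 1 := by
  ext i j
  rw [mul_apply', one_apply]
  exact h i j

theorem mul_transpose_of_mulVec_eq_smul {A : Matrix ι ι R} {u : ι → ι → R} {w : ι → R}
    (h : ∀ i, A *ᵥ u i = w i • u i) : A * (of u)ᵀ = (of u)ᵀ * diagonal w := by
  ext i j
  rw [mul_diagonal, mul_apply']
  exact (congrFun (h j) i).trans (mul_comm _ _)

theorem eq_transpose_mul_diagonal_mul {A Q : Matrix ι ι R} {w : ι → R} (hQ : Q * Qᵀ = 1)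
    (hAQ : A * Qᵀ = Qᵀ * diagonal w) : A = Qᵀ * diagonal w * Q := by
  rw [← hAQ, mul_assoc, mul_eq_one_comm.mp hQ, mul_one]

theorem dotProduct_mulVec_self_of_transpose_mul {Q : Matrix ι ι R} (hQ : Qᵀ * Q = 1) (x : ι → R) :
    (Q *ᵥ x) ⬝ᵥ (Q *ᵥ x) = x ⬝ᵥ x := by
  rw [dotProduct_mulVec, ← mulVec_transpose, mulVec_mulVec, hQ, one_mulVec]

end Orthonormal

open scoped MatrixOrder in
theorem invSqrt_eq_of_mul_self {p : ℕ} {A B : Matrix (Fin p) (Fin p) ℝ} (hA : A.PosDef)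
    (hB : B.PosSemidef) (hBB : B * B = A⁻¹) : invSqrt A = B := by
  rw [invSqrt, dif_pos hA]
  have h1 : cfc Real.sqrt A⁻¹ =
      (hA.inv.posSemidef.1.eigenvectorUnitary : Matrix (Fin p) (Fin p) ℝ) *
      diagonal (fun i => Real.sqrt (hA.inv.posSemidef.1.eigenvalues i)) *
      (star hA.inv.posSemidef.1.eigenvectorUnitary : Matrix (Fin p) (Fin p) ℝ) := by
    rw [hA.inv.posSemidef.1.cfc_eq]; rfl
  rw [← h1, ← cfcₙ_eq_cfc, ← CFC.sqrt_eq_real_sqrt _ hA.inv.posSemidef.nonneg]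
  exact CFC.sqrt_unique hBB hB.nonneg

theorem invSqrt_eq_of_orthonormal_eigenbasis {p : ℕ} {A Q : Matrix (Fin p) (Fin p) ℝ}
    {w : Fin p → ℝ} (hA : A.PosDef) (hQ : Q * Qᵀ = 1) (hw : ∀ i, 0 < w i)
    (hAQ : A * Qᵀ = Qᵀ * diagonal w) :
    invSqrt A = Qᵀ * diagonal (fun i => (√(w i))⁻¹) * Q := by
  have hconj : ∀ a b : Fin p → ℝ,
      Qᵀ * diagonal a * Q * (Qᵀ * diagonal b * Q) = Qᵀ * diagonal (a * b) * Q := by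
    intro a b
    rw [show diagonal (a * b) = diagonal a * diagonal b from (diagonal_mul_diagonal a b).symm]
    simp only [Matrix.mul_assoc, ← Matrix.mul_assoc Q Qᵀ, hQ, Matrix.one_mul]
  apply invSqrt_eq_of_mul_self hA
  · simpa using (posSemidef_diagonal_iff.mpr fun i => inv_nonneg.mpr (Real.sqrt_nonneg (w i))
      ).mul_mul_conjTranspose_same Qᵀ
  · rw [hconj, eq_comm, eq_transpose_mul_diagonal_mul hQ hAQ]
    refine inv_eq_left_inv ?_
    have hw1 : ((fun i => (√(w i))⁻¹) * fun i => (√(w i))⁻¹) * w = fun _ => 1 := by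
      funext i
      simp [← mul_inv, Real.mul_self_sqrt (hw i).le, (hw i).ne']
    rw [hconj, hw1, diagonal_one, Matrix.mul_one, mul_eq_one_comm.mp hQ]

theorem conj_mulVec_scaled_eigenvector {ι K : Type*} [Fintype ι] [DecidableEq ι] [Field K]
    {A Q : Matrix ι ι K} {s x : ι → K} {μ : K} (hQ : Q * Qᵀ = 1) (hs : ∀ i, s i ≠ 0)
    (hx : A *ᵥ x = μ • x) :
    (Q * (Qᵀ * diagonal s⁻¹ * Q * A * (Qᵀ * diagonal s⁻¹ * Q)) * Qᵀ) *ᵥ (diagonal s *ᵥ (Q *ᵥ x))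
      = diagonal (fun i => μ * (s i ^ 2)⁻¹) *ᵥ (diagonal s *ᵥ (Q *ᵥ x)) := by
  have hss : diagonal s⁻¹ * diagonal s = 1 := by
    rw [diagonal_mul_diagonal, ← diagonal_one]
    exact congrArg diagonal (funext fun i => inv_mul_cancel₀ (hs i))
  have hQT : Q * (Qᵀ * diagonal s⁻¹ * Q) = diagonal s⁻¹ * Q := by
    rw [← Matrix.mul_assoc, ← Matrix.mul_assoc, hQ, Matrix.one_mul]
  have hTinv : Qᵀ * diagonal s⁻¹ * Q * Qᵀ * diagonal s * Q = 1 := by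
    rw [Matrix.mul_assoc _ Q, hQ, Matrix.mul_one, Matrix.mul_assoc _ _ (diagonal s), hss,
      Matrix.mul_one, mul_eq_one_comm.mp hQ]
  calc _ = (Q * (Qᵀ * diagonal s⁻¹ * Q)) *ᵥ (A *ᵥ
        ((Qᵀ * diagonal s⁻¹ * Q * Qᵀ * diagonal s * Q) *ᵥ x)) := by
        simp only [mulVec_mulVec, Matrix.mul_assoc]
    _ = μ • ((diagonal s⁻¹ * Q) *ᵥ x) := by rw [hTinv, one_mulVec, hx, mulVec_smul, hQT]
    _ = _ := by
        rw [mulVec_mulVec, mulVec_mulVec, diagonal_mul_diagonal, ← mulVec_mulVec,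
          ← mulVec_mulVec, ← smul_mulVec, ← diagonal_smul]
        congr 2
        funext i
        simp only [Pi.smul_apply, Pi.inv_apply, smul_eq_mul]
        field_simp [hs i]

theorem submatrix_succAbove_sub_diagonal_mulVec {R : Type*} [CommRing R] {n : ℕ}
    {N : Matrix (Fin (n + 1)) (Fin (n + 1)) R} {μ d : Fin (n + 1) → R} (k : Fin (n + 1))
    (h : N *ᵥ d = diagonal μ *ᵥ d) :
    (N.submatrix k.succAbove k.succAbove - diagonal (μ ∘ k.succAbove)) *ᵥ (d ∘ k.succAbove)
      = -d k • fun m => N (k.succAbove m) k := by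
  ext m
  have hrow := congrFun h (k.succAbove m)
  rw [mulVec, dotProduct, Fin.sum_univ_succAbove _ k, mulVec_diagonal] at hrow
  simp only [sub_mulVec, Pi.sub_apply, mulVec_diagonal, Pi.smul_apply, smul_eq_mul]
  rw [mulVec, dotProduct]
  simp only [submatrix_apply, Function.comp_apply]
  linear_combination hrow

theorem submatrix_mul_mul_transpose {ι κ R : Type*} [Fintype ι] [CommRing R]
    (Q A : Matrix ι ι R) (e : κ → ι) :
    Q.submatrix e id * A * (Q.submatrix e id)ᵀ = (Q * A * Qᵀ).submatrix e e := by
  rw [submatrix_mul _ _ _ id _ Function.bijective_id,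
    submatrix_mul _ _ _ id _ Function.bijective_id]
  rfl

theorem submatrix_mulVec_mulVec_row {ι κ R : Type*} [Fintype ι] [CommRing R]
    (u : ι → ι → R) (A : Matrix ι ι R) (e : κ → ι) (k : ι) :
    (of u).submatrix e id *ᵥ (A *ᵥ u k) = fun m => (of u * A * (of u)ᵀ) (e m) k := by
  ext m
  change _ = ((of u * A) *ᵥ u k) (e m)
  rw [← mulVec_mulVec]
  rfl

theorem sq_eq_one_div_of_dotProduct_self_eq_one {n : ℕ} {c : Fin (n + 1) → ℝ} {v : Fin n → ℝ}
    {k : Fin (n + 1)} {t : ℝ} (hc : c ⬝ᵥ c = 1) (hv : c ∘ k.succAbove = (t * c k) • v) :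
    c k ^ 2 = 1 / (1 + t ^ 2 * (v ⬝ᵥ v)) := by
  have hsplit : c ⬝ᵥ c = c k ^ 2 + (c ∘ k.succAbove) ⬝ᵥ (c ∘ k.succAbove) := by
    rw [dotProduct, Fin.sum_univ_succAbove _ k, sq]
    rfl
  rw [hsplit, hv, dotProduct_smul, smul_dotProduct, smul_eq_mul, smul_eq_mul] at hc
  have hv0 : 0 ≤ v ⬝ᵥ v := by simpa using dotProduct_star_self_nonneg v
  rw [eq_div_iff (by positivity)]
  linear_combination hc

theorem vecNorm_sq {ι : Type*} [Fintype ι] (v : ι → ℝ) : vecNorm v ^ 2 = v ⬝ᵥ v := by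
  rw [vecNorm, Real.sq_sqrt (by positivity)]
  simp only [dotProduct, sq]

theorem sq_apply_eq_of_mulVec_eq_diagonal_mulVec {n : ℕ} {N : Matrix (Fin (n + 1)) (Fin (n + 1)) ℝ}
    {μ s c : Fin (n + 1) → ℝ} {w : Fin n → ℝ} (k : Fin (n + 1)) (hs : ∀ i, s i ≠ 0)
    (hc : c ⬝ᵥ c = 1) (hN : N *ᵥ (diagonal s *ᵥ c) = diagonal μ *ᵥ (diagonal s *ᵥ c))
    (hM : IsUnit (N.submatrix k.succAbove k.succAbove - diagonal (μ ∘ k.succAbove)))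
    (hw : w = diagonal (fun j => (s (k.succAbove j))⁻¹) *ᵥ
      ((N.submatrix k.succAbove k.succAbove - diagonal (μ ∘ k.succAbove))⁻¹ *ᵥ
        fun m => N (k.succAbove m) k)) :
    c k ^ 2 = 1 / (1 + s k ^ 2 * (w ⬝ᵥ w)) := by
  set M := N.submatrix k.succAbove k.succAbove - diagonal (μ ∘ k.succAbove)
  set d := diagonal s *ᵥ c
  have hdM : d ∘ k.succAbove = -d k • M⁻¹ *ᵥ fun m => N (k.succAbove m) k := by
    rw [← mulVec_smul, ← submatrix_succAbove_sub_diagonal_mulVec k hN, mulVec_mulVec,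
      nonsing_inv_mul _ ((isUnit_iff_isUnit_det M).mp hM), one_mulVec]
  have hcw : c ∘ k.succAbove = (-s k * c k) • w := by
    funext m
    have hdm := congrFun hdM m
    simp only [d, Function.comp_apply, Pi.smul_apply, smul_eq_mul, mulVec_diagonal] at hdm
    rw [Function.comp_apply, Pi.smul_apply, smul_eq_mul, hw, mulVec_diagonal,
      ← inv_mul_cancel_left₀ (hs (k.succAbove m)) (c _), hdm]
    ring
  rw [sq_eq_one_div_of_dotProduct_self_eq_one hc hcw, neg_sq]

/-- The dimension is `p = n + 1`; `k.succAbove` enumerates the indices `≠ k`, so `U` is `U_{0,−k}`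
and the diagonal matrices are `Λ_{0,−k}^{−1}` and `Λ_{0,−k}^{−1/2}`. -/
theorem statement15_general {n : ℕ}
    (Sig Sig0 : Matrix (Fin (n + 1)) (Fin (n + 1)) ℝ)
    (hSig0 : Sig0.PosDef)
    (k : Fin (n + 1))
    (lam0 : Fin (n + 1) → ℝ) (u0 : Fin (n + 1) → Fin (n + 1) → ℝ)
    (hpos : ∀ i, 0 < lam0 i)
    (horth : ∀ i j, u0 i ⬝ᵥ u0 j = if i = j then (1 : ℝ) else 0)
    (heig0 : ∀ i, Sig0.mulVec (u0 i) = lam0 i • u0 i)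
    (lamk : ℝ)
    (uk : Fin (n + 1) → ℝ) (huk : vecNorm uk = 1)
    (heigk : Sig.mulVec uk = lamk • uk)
    (Omg : Matrix (Fin (n + 1)) (Fin (n + 1)) ℝ)
    (hOmg : Omg = invSqrt Sig0 * Sig * invSqrt Sig0)
    (U : Matrix (Fin (n + 1)) (Fin n) ℝ)
    (hU : U = Matrix.of fun i j => u0 (k.succAbove j) i)
    (M : Matrix (Fin n) (Fin n) ℝ)
    (hM : M = Uᵀ * Omg * U - lamk • Matrix.diagonal (fun j => (lam0 (k.succAbove j))⁻¹))
    (hMunit : IsUnit M)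
    (v : Fin n → ℝ)
    (hv : v = (Matrix.diagonal fun j => (Real.sqrt (lam0 (k.succAbove j)))⁻¹).mulVec
        (M⁻¹.mulVec (Uᵀ.mulVec (Omg.mulVec (u0 k))))) :
    (uk ⬝ᵥ u0 k) ^ 2 = 1 / (1 + vecNorm (Real.sqrt (lam0 k) • v) ^ 2) := by
  set Q := of u0
  set s : Fin (n + 1) → ℝ := fun i => √(lam0 i)
  have hQ : Q * Qᵀ = 1 := of_mul_transpose_eq_one horth
  have hs : ∀ i, s i ≠ 0 := fun i => (Real.sqrt_pos.2 (hpos i)).ne'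
  have hs2 : ∀ i, s i ^ 2 = lam0 i := fun i => Real.sq_sqrt (hpos i).le
  have hT : invSqrt Sig0 = Qᵀ * diagonal s⁻¹ * Q :=
    invSqrt_eq_of_orthonormal_eigenbasis hSig0 hQ hpos (mul_transpose_of_mulVec_eq_smul heig0)
  have hN : (Q * Omg * Qᵀ) *ᵥ (diagonal s *ᵥ (Q *ᵥ uk))
      = diagonal (fun i => lamk * (lam0 i)⁻¹) *ᵥ (diagonal s *ᵥ (Q *ᵥ uk)) := by
    rw [hOmg, hT]
    simpa only [hs2] using conj_mulVec_scaled_eigenvector hQ hs heigk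
  have hUQ : U = (Q.submatrix k.succAbove id)ᵀ := by rw [hU]; rfl
  have hMN : M = (Q * Omg * Qᵀ).submatrix k.succAbove k.succAbove
      - diagonal ((fun i => lamk * (lam0 i)⁻¹) ∘ k.succAbove) := by
    rw [hM, hUQ, transpose_transpose, submatrix_mul_mul_transpose, ← diagonal_smul]
    rfl
  have hc : (Q *ᵥ uk) ⬝ᵥ (Q *ᵥ uk) = 1 := by
    rw [dotProduct_mulVec_self_of_transpose_mul (mul_eq_one_comm.mp hQ), ← vecNorm_sq, huk,
      one_pow]
  rw [dotProduct_comm, vecNorm_sq, dotProduct_smul, smul_dotProduct, smul_eq_mul, smul_eq_mul,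
    ← mul_assoc, ← sq]
  refine sq_apply_eq_of_mulVec_eq_diagonal_mulVec k hs hc hN (hMN ▸ hMunit) ?_
  rw [hv, hUQ, transpose_transpose, submatrix_mulVec_mulVec_row, hMN]

/-- Appendix Lemma D.0 (exact eigenvector overlap formula).  The dimension is
`p = n + 1`; `k.succAbove` enumerates the indices `≠ k`, so `U` is `U_{0,−k}` and the
diagonal matrices are `Λ_{0,−k}^{−1}` and `Λ_{0,−k}^{−1/2}`. -/
theorem statement15 {n : ℕ}
    (Sig Sig0 : Matrix (Fin (n + 1)) (Fin (n + 1)) ℝ)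
    (hSig : Sig.PosDef) (hSig0 : Sig0.PosDef)
    (k : Fin (n + 1))
    (lam0 : Fin (n + 1) → ℝ) (u0 : Fin (n + 1) → Fin (n + 1) → ℝ)
    (hpos : ∀ i, 0 < lam0 i) (hmono : Antitone lam0)
    (horth : ∀ i j, u0 i ⬝ᵥ u0 j = if i = j then (1 : ℝ) else 0)
    (heig0 : ∀ i, Sig0.mulVec (u0 i) = lam0 i • u0 i)
    (lamk : ℝ) (hlamk : lamk = eigval Sig k)
    (uk : Fin (n + 1) → ℝ) (huk : vecNorm uk = 1)
    (heigk : Sig.mulVec uk = lamk • uk)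
    (hsimple : ∀ l, l ≠ k → eigval Sig l ≠ eigval Sig k)
    (Omg : Matrix (Fin (n + 1)) (Fin (n + 1)) ℝ)
    (hOmg : Omg = invSqrt Sig0 * Sig * invSqrt Sig0)
    (U : Matrix (Fin (n + 1)) (Fin n) ℝ)
    (hU : U = Matrix.of fun i j => u0 (k.succAbove j) i)
    (M : Matrix (Fin n) (Fin n) ℝ)
    (hM : M = Uᵀ * Omg * U - lamk • Matrix.diagonal (fun j => (lam0 (k.succAbove j))⁻¹))
    (hMunit : IsUnit M)
    (v : Fin n → ℝ)
    (hv : v = (Matrix.diagonal fun j => (Real.sqrt (lam0 (k.succAbove j)))⁻¹).mulVec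
        (M⁻¹.mulVec (Uᵀ.mulVec (Omg.mulVec (u0 k)))))
    (hsmall : lam0 k * vecNorm v ^ 2 < 1) :
    (uk ⬝ᵥ u0 k) ^ 2 = 1 / (1 + vecNorm (Real.sqrt (lam0 k) • v) ^ 2) :=
  statement15_general Sig Sig0 hSig0 k lam0 u0 hpos horth heig0 lamk uk huk heigk Omg hOmg U hU M hM
    hMunit v hv
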